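/- arXiv:2212.11371 — 2 statements merged into one kernel-verified Lean document; each statement's English description precedes it below -/
import Mathlib

section
/- Let r ≥ 1 and let θ = (θ₁, …, θ_{2r}) ∈ {1,2}^{2r} be a symmetric word of even length, i.e. θ_i = θ_{2r+1−i} for all 1 ≤ i ≤ 2r. For x, y ∈ (0,1) define h(x,y) = 2 + y + [0; θ₁, …, θ_{2r}, 2 + x]. Then: (i) for each fixed x ∈ (0,1) the function y ↦ h(x,y) is strictly increasing on (0,1), and for each fixed y ∈ (0,1) the function x ↦ h(x,y) is strictly decreasing on (0,1); (ii) if x, y ∈ (0,1) satisfy h(x,y) ≥ h(y,x), then x ≤ y and h(x,y) ≥ h(y,y); (iii) the function y ↦ h(y,y) = 2 + y + [0; θ₁, …, θ_{2r}, 2 + y] is strictly increasing on (0,1). Consequently, the minimal possible value of max{h(x,y), h(y,x)} over x, y ranging in any set X ⊆ (0,1) possessing a minimum is h(y₀, y₀), where y₀ = min X. -/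
open Filter Set MeasureTheory
open scoped ENNReal

/-- Finite continued fraction `[a 0; a 1, ..., a n]`. -/
noncomputable def cfConv : (ℕ → ℝ) → ℕ → ℝ
  | a, 0 => a 0
  | a, n + 1 => a 0 + 1 / cfConv (fun i => a (i + 1)) n

/-- Value of the infinite continued fraction `[a 0; a 1, a 2, ...]`,
as the limit of its convergents. -/
noncomputable def cfVal (a : ℕ → ℝ) : ℝ := limUnder atTop (cfConv a)

/-- `λ_k(α) = [α_k; α_{k+1}, ...] + [0; α_{k-1}, α_{k-2}, ...]`. -/
noncomputable def lambdaVal (α : ℤ → ℕ) (k : ℤ) : ℝ :=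
  cfVal (fun n => (α (k + n) : ℝ)) +
  cfVal (fun n => if n = 0 then 0 else (α (k - n) : ℝ))

/-- The Markov value `m(α) = sup_{k ∈ ℤ} λ_k(α)`. -/
noncomputable def markovValue (α : ℤ → ℕ) : ℝ := ⨆ k : ℤ, lambdaVal α k

/-- The Markov spectrum. -/
def markovSpectrum : Set ℝ :=
  { x | ∃ α : ℤ → ℕ, (∀ n, 0 < α n) ∧ BddAbove (range (lambdaVal α)) ∧
      markovValue α = x }

/-- The dimension function `d(t) = dim_H (M ∩ (-∞, t))`. -/
noncomputable def dimFun (t : ℝ) : ℝ≥0∞ := dimH (markovSpectrum ∩ Iio t)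

/-- `h(x,y) = 2 + y + [0; θ₁, …, θ_{2r}, 2 + x]`, where the finite continued
fraction has first entry `0`, then the entries of the word `θ`, then `2 + x`. -/
noncomputable def hAux (r : ℕ) (θ : ℕ → ℕ) (x y : ℝ) : ℝ :=
  2 + y +
    cfConv (fun n => if n = 0 then 0 else if n ≤ 2 * r then (θ n : ℝ) else 2 + x)
      (2 * r + 1)

/-!
Write `h(x, y) = 2 + y + F x` with `F x = [0; θ₁, …, θ_{2r}, 2 + x]`. The map `F` is a composition
of `2r + 1` maps `w ↦ a + 1/w`; each reverses order and strictly contracts distances on `[1, ∞)`,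
so `F` is strictly decreasing with slope in `(-1, 0)`. Thus `h` increases in `y`, decreases in `x`,
and `y ↦ y + F y` increases. The remaining claims follow formally from these three monotonicity
properties.
-/

section SwapMax

variable {α β : Type*} [LinearOrder α] [LinearOrder β] {S : Set α} {h : α → α → β}

theorem le_and_diag_le_of_swap_le (hmono : ∀ x ∈ S, StrictMonoOn (h x) S)
    (hanti : ∀ y ∈ S, StrictAntiOn (fun x => h x y) S) {x y : α} (hx : x ∈ S) (hy : y ∈ S)
    (hswap : h y x ≤ h x y) : x ≤ y ∧ h y y ≤ h x y := by
  have hxy : x ≤ y := by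
    by_contra! hyx
    exact (((hanti y hy) hy hx hyx).trans ((hmono y hy) hy hx hyx)).not_ge hswap
  exact ⟨hxy, (hanti y hy).antitoneOn hx hy hxy⟩

/-- `max (h x y) (h y x)` dominates the diagonal value at the larger of `x, y`. -/
theorem isLeast_image_max_swap (hswap : ∀ x ∈ S, ∀ y ∈ S, h y x ≤ h x y → h y y ≤ h x y)
    (hdiag : MonotoneOn (fun y => h y y) S) {X : Set α} (hX : X ⊆ S) {y₀ : α}
    (hy₀ : IsLeast X y₀) :
    IsLeast ((fun p : α × α => max (h p.1 p.2) (h p.2 p.1)) '' X ×ˢ X) (h y₀ y₀) := by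
  refine ⟨⟨(y₀, y₀), ⟨hy₀.1, hy₀.1⟩, max_self _⟩, ?_⟩
  rintro _ ⟨⟨x, y⟩, ⟨hx, hy⟩, rfl⟩
  rcases le_total (h y x) (h x y) with hle | hle
  · calc h y₀ y₀ ≤ h y y := hdiag (hX hy₀.1) (hX hy) (hy₀.2 hy)
      _ ≤ h x y := hswap x (hX hx) y (hX hy) hle
      _ ≤ _ := le_max_left _ _
  · calc h y₀ y₀ ≤ h x x := hdiag (hX hy₀.1) (hX hx) (hy₀.2 hx)
      _ ≤ h y x := hswap y (hX hy) x (hX hx) hle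
      _ ≤ _ := le_max_right _ _

end SwapMax

theorem one_le_cfConv {a : ℕ → ℝ} {n : ℕ} (ha : ∀ i ≤ n, 1 ≤ a i) : 1 ≤ cfConv a n := by
  induction n generalizing a with
  | zero => exact ha 0 le_rfl
  | succ n ih =>
    have hpos : 0 < cfConv (fun i => a (i + 1)) n := by
      linarith [ih fun i hi => ha (i + 1) (by omega)]
    rw [cfConv]
    linarith [ha 0 (Nat.zero_le _), one_div_pos.mpr hpos]

theorem neg_mul_one_div_sub_one_div_mem_Ioo {u v t c : ℝ} (hu : 1 ≤ u) (hv : 1 ≤ v)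
    (h : t * (v - u) ∈ Ioc 0 c) : -t * (1 / v - 1 / u) ∈ Ioo 0 c := by
  have huv : 1 < u * v := by
    rcases (show u ≠ v by rintro rfl; simp at h).lt_or_gt with huv | huv <;> nlinarith
  have heq : -t * (1 / v - 1 / u) = t * (v - u) / (u * v) := by field_simp; ring
  rw [heq]
  exact ⟨div_pos h.1 (by linarith), (div_lt_self h.1 huv).trans_le h.2⟩

/-- Each level `w ↦ a + 1/w` flips the sign of a perturbation of the last entry and, on `[1, ∞)`,
strictly contracts it. -/
theorem cfConv_succ_sub_mem_Ioo {f g : ℕ → ℝ} {n : ℕ} (hfg : ∀ i ≤ n, f i = g i)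
    (hf : ∀ i, 1 ≤ i → i ≤ n + 1 → 1 ≤ f i) (hlt : f (n + 1) < g (n + 1)) :
    (-1) ^ (n + 1) * (cfConv g (n + 1) - cfConv f (n + 1)) ∈ Ioo 0 (g (n + 1) - f (n + 1)) := by
  have hg : ∀ i, 1 ≤ i → i ≤ n + 1 → 1 ≤ g i := fun i h1 h2 => by
    rcases h2.lt_or_eq with h2 | rfl
    · exact hfg i (by omega) ▸ hf i h1 h2.le
    · linarith [hf _ h1 le_rfl]
  have hsub : cfConv g (n + 1) - cfConv f (n + 1) =
      1 / cfConv (fun i => g (i + 1)) n - 1 / cfConv (fun i => f (i + 1)) n := by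
    simp only [cfConv, hfg 0 (Nat.zero_le _)]; ring
  have hshift : (-1) ^ n * (cfConv (fun i => g (i + 1)) n - cfConv (fun i => f (i + 1)) n) ∈
      Ioc 0 (g (n + 1) - f (n + 1)) := by
    cases n with
    | zero => simpa [cfConv] using hlt
    | succ n =>
      exact Ioo_subset_Ioc_self (cfConv_succ_sub_mem_Ioo (fun i hi => hfg (i + 1) (by omega))
        (fun i h1 h2 => hf (i + 1) (by omega) (by omega)) hlt)
  rw [hsub, pow_succ, mul_neg_one]
  exact neg_mul_one_div_sub_one_div_mem_Ioo
    (one_le_cfConv fun i hi => hf (i + 1) (by omega) (by omega))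
    (one_le_cfConv fun i hi => hg (i + 1) (by omega) (by omega)) hshift

section hAux

variable {r : ℕ} {θ : ℕ → ℕ}

theorem hAux_sub_hAux_right (x y₁ y₂ : ℝ) : hAux r θ x y₁ - hAux r θ x y₂ = y₁ - y₂ := by
  unfold hAux; ring

theorem hAux_sub_hAux_left_mem_Ioo (hθ : ∀ i, 1 ≤ i → i ≤ 2 * r → 1 ≤ θ i) (y : ℝ)
    {x₁ x₂ : ℝ} (hx₁ : -1 ≤ x₁) (hlt : x₁ < x₂) :
    hAux r θ x₁ y - hAux r θ x₂ y ∈ Ioo 0 (x₂ - x₁) := by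
  have hcf := cfConv_succ_sub_mem_Ioo (n := 2 * r)
    (f := fun n => if n = 0 then 0 else if n ≤ 2 * r then (θ n : ℝ) else 2 + x₁)
    (g := fun n => if n = 0 then 0 else if n ≤ 2 * r then (θ n : ℝ) else 2 + x₂)
    (fun i hi => by simp only [if_pos hi])
    (fun i h1 h2 => by
      rcases h2.lt_or_eq with h2 | rfl
      · simp only [if_neg (show i ≠ 0 by omega), if_pos (show i ≤ 2 * r by omega)]
        exact_mod_cast hθ i h1 (by omega)
      · simp only [if_neg (show 2 * r + 1 ≠ 0 by omega),
          if_neg (show ¬ 2 * r + 1 ≤ 2 * r by omega)]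
        linarith)
    (by simpa using hlt)
  rw [pow_succ, pow_mul, neg_one_sq, one_pow, one_mul, neg_one_mul, neg_sub] at hcf
  simpa [hAux] using hcf

theorem hAux_strictMono_right (x : ℝ) : StrictMono (hAux r θ x) := fun y₁ y₂ h => by
  linarith [hAux_sub_hAux_right (r := r) (θ := θ) x y₂ y₁]

theorem hAux_strictAntiOn_left (hθ : ∀ i, 1 ≤ i → i ≤ 2 * r → 1 ≤ θ i) (y : ℝ) :
    StrictAntiOn (fun x => hAux r θ x y) (Ici (-1)) := fun _ hx₁ _ _ h =>
  sub_pos.mp (hAux_sub_hAux_left_mem_Ioo hθ y hx₁ h).1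

theorem hAux_diag_strictMonoOn (hθ : ∀ i, 1 ≤ i → i ≤ 2 * r → 1 ≤ θ i) :
    StrictMonoOn (fun y => hAux r θ y y) (Ici (-1)) := fun y₁ hy₁ y₂ _ h => by
  have hleft := (hAux_sub_hAux_left_mem_Ioo hθ y₁ hy₁ h).2
  have hright := hAux_sub_hAux_right (r := r) (θ := θ) y₂ y₂ y₁
  dsimp only
  linarith

end hAux

theorem hAux_monotonicity_general (r : ℕ) (θ : ℕ → ℕ)
    (hθ : ∀ i, 1 ≤ i → i ≤ 2 * r → θ i = 1 ∨ θ i = 2) :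
    (∀ x ∈ Ioo (0 : ℝ) 1, StrictMonoOn (fun y => hAux r θ x y) (Ioo 0 1)) ∧
    (∀ y ∈ Ioo (0 : ℝ) 1, StrictAntiOn (fun x => hAux r θ x y) (Ioo 0 1)) ∧
    (∀ x ∈ Ioo (0 : ℝ) 1, ∀ y ∈ Ioo (0 : ℝ) 1,
      hAux r θ x y ≥ hAux r θ y x → x ≤ y ∧ hAux r θ x y ≥ hAux r θ y y) ∧
    StrictMonoOn (fun y => hAux r θ y y) (Ioo 0 1) ∧
    (∀ X : Set ℝ, X ⊆ Ioo (0 : ℝ) 1 → ∀ y₀ : ℝ, IsLeast X y₀ →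
      IsLeast
        ((fun p : ℝ × ℝ => max (hAux r θ p.1 p.2) (hAux r θ p.2 p.1)) '' (X ×ˢ X))
        (hAux r θ y₀ y₀)) := by
  have hθ' : ∀ i, 1 ≤ i → i ≤ 2 * r → 1 ≤ θ i := fun i h1 h2 => by
    rcases hθ i h1 h2 with h | h <;> omega
  have hIoo : Ioo (0 : ℝ) 1 ⊆ Ici (-1) := fun x hx => by simp only [mem_Ici]; linarith [hx.1]
  have hmono : ∀ x ∈ Ioo (0 : ℝ) 1, StrictMonoOn (fun y => hAux r θ x y) (Ioo 0 1) :=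
    fun x _ => (hAux_strictMono_right x).strictMonoOn _
  have hanti : ∀ y ∈ Ioo (0 : ℝ) 1, StrictAntiOn (fun x => hAux r θ x y) (Ioo 0 1) :=
    fun y _ => (hAux_strictAntiOn_left hθ' y).mono hIoo
  have hswap : ∀ x ∈ Ioo (0 : ℝ) 1, ∀ y ∈ Ioo (0 : ℝ) 1,
      hAux r θ x y ≥ hAux r θ y x → x ≤ y ∧ hAux r θ x y ≥ hAux r θ y y :=
    fun x hx y hy => le_and_diag_le_of_swap_le hmono hanti hx hy
  have hdiag := (hAux_diag_strictMonoOn hθ').mono hIoo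
  exact ⟨hmono, hanti, hswap, hdiag, fun X hX y₀ hy₀ =>
    isLeast_image_max_swap (fun x hx y hy h => (hswap x hx y hy h).2) hdiag.monotoneOn hX hy₀⟩

/-- Monotonicity properties of `h(x,y) = 2 + y + [0; θ, 2 + x]` for a symmetric
word `θ ∈ {1,2}^{2r}`, and the consequence that the minimal value of
`max{h(x,y), h(y,x)}` over `x, y` in a set `X ⊆ (0,1)` possessing a minimum `y₀`
is `h(y₀, y₀)`. -/
theorem hAux_monotonicity (r : ℕ) (hr : 1 ≤ r) (θ : ℕ → ℕ)
    (hθ : ∀ i, 1 ≤ i → i ≤ 2 * r → θ i = 1 ∨ θ i = 2)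
    (hsym : ∀ i, 1 ≤ i → i ≤ 2 * r → θ i = θ (2 * r + 1 - i)) :
    (∀ x ∈ Ioo (0 : ℝ) 1, StrictMonoOn (fun y => hAux r θ x y) (Ioo 0 1)) ∧
    (∀ y ∈ Ioo (0 : ℝ) 1, StrictAntiOn (fun x => hAux r θ x y) (Ioo 0 1)) ∧
    (∀ x ∈ Ioo (0 : ℝ) 1, ∀ y ∈ Ioo (0 : ℝ) 1,
      hAux r θ x y ≥ hAux r θ y x → x ≤ y ∧ hAux r θ x y ≥ hAux r θ y y) ∧
    StrictMonoOn (fun y => hAux r θ y y) (Ioo 0 1) ∧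
    (∀ X : Set ℝ, X ⊆ Ioo (0 : ℝ) 1 → ∀ y₀ : ℝ, IsLeast X y₀ →
      IsLeast
        ((fun p : ℝ × ℝ => max (hAux r θ p.1 p.2) (hAux r θ p.2 p.1)) '' (X ×ˢ X))
        (hAux r θ y₀ y₀)) :=
  hAux_monotonicity_general r θ hθ
end

section
/- Among all bi-infinite sequences α ∈ {1,2}^ℤ that do not contain the word (1,2,1) as a factor, the supremum of the Markov values m(α) equals 4√30/7, and it is attained: m(α) ≤ 4√30/7 for every α ∈ {1,2}^ℤ without the factor (1,2,1), with equality for the periodic sequence of period (2,1,2,2), whose Markov value is [2; \overline{1,2,2,2}] + [0; \overline{2,2,1,2}] = 4√30/7. -/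
open Filter Set MeasureTheory
open scoped ENNReal

/-- A finite word `w` is a factor of the bi-infinite sequence `α`. -/
def hasFactor (α : ℤ → ℕ) (w : List ℕ) : Prop :=
  ∃ j : ℤ, ∀ i : Fin w.length, α (j + (i : ℕ)) = w.get i

/-- The bi-infinite periodic sequence of period `(2,1,2,2)`. -/
def per2122 : ℤ → ℕ := fun n => if n % 4 = 1 then 1 else 2

/-!
For `x ∈ {1,2}^ℕ` avoiding `1,2,1` one has `[x 0; x 1, …] ≥ μ (x 0)`, where
`μ 1 = [\overline{1,2,2,2}]` and `μ 2 = [\overline{2,2,1,2}]`. This family of bounds is preserved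
by `t ↦ x 0 + 1 / (x 1 + 1 / t)` (a check over the admissible triples `x 0, x 1, x 2`), and that
map contracts `[1, ∞)` by a factor `4`, so the trivial bound, off by at most `2`, improves to the
exact one. Writing `λ_k = α_k + 1/R + 1/L`, the case `α_k = 1` gives `λ_k ≤ 3`; for `α_k = 2` the
neighbours are not both `1`, so `λ_k ≤ 2 + 1/μ 1 + 1/μ 2 = 4√30/7`, with equality for the period
`2,1,2,2`.
-/

open Topology

noncomputable def cfWithTail : (ℕ → ℝ) → ℕ → ℝ → ℝ
  | _, 0, t => t
  | a, n + 1, t => a 0 + 1 / cfWithTail (fun i => a (i + 1)) n t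

lemma cfConv_eq_cfWithTail (a : ℕ → ℝ) (n : ℕ) : cfConv a n = cfWithTail a n (a n) := by
  induction n generalizing a with
  | zero => rfl
  | succ n ih => rw [cfConv, cfWithTail, ih]

lemma cfConv_succ_eq_cfWithTail (a : ℕ → ℝ) (n : ℕ) :
    cfConv a (n + 1) = cfWithTail a n (a n + 1 / a (n + 1)) := by
  induction n generalizing a with
  | zero => rfl
  | succ n ih => rw [cfConv, cfWithTail, ih]

lemma one_le_cfWithTail {a : ℕ → ℝ} (ha : ∀ i, 1 ≤ a i) (n : ℕ) {t : ℝ} (ht : 1 ≤ t) :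
    1 ≤ cfWithTail a n t := by
  induction n generalizing a with
  | zero => exact ht
  | succ n ih =>
    have := ih fun i => ha (i + 1)
    rw [cfWithTail]
    linarith [ha 0, one_div_nonneg.2 (by linarith : (0 : ℝ) ≤ cfWithTail _ n t)]

lemma abs_one_div_sub_one_div_le {s t : ℝ} (hs : 1 ≤ s) (ht : 1 ≤ t) :
    |1 / s - 1 / t| ≤ |s - t| := by
  have hst : 1 ≤ s * t := one_le_mul_of_one_le_of_one_le hs ht
  rw [div_sub_div _ _ (by positivity) (by positivity), one_mul, mul_one, abs_div,
    abs_of_pos (by positivity : 0 < s * t), abs_sub_comm]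
  exact div_le_self (abs_nonneg _) hst

lemma two_step_sub_two_step (a : ℝ) {b s t : ℝ} (hb : 0 ≤ b) (hs : 0 < s) (ht : 0 < t) :
    a + 1 / (b + 1 / s) - (a + 1 / (b + 1 / t)) = (s - t) / ((b * s + 1) * (b * t + 1)) := by
  field_simp
  ring

lemma two_step_mono (a : ℝ) {b s t : ℝ} (hb : 0 ≤ b) (hs : 0 < s) (hst : s ≤ t) :
    a + 1 / (b + 1 / s) ≤ a + 1 / (b + 1 / t) := by
  have ht : 0 < t := hs.trans_le hst
  gcongr

lemma four_le_two_step_denom {b s t : ℝ} (hb : 1 ≤ b) (hs : 1 ≤ s) (ht : 1 ≤ t) :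
    4 ≤ (b * s + 1) * (b * t + 1) := by
  have := one_le_mul_of_one_le_of_one_le hb hs
  have := one_le_mul_of_one_le_of_one_le hb ht
  nlinarith

lemma abs_two_step_sub_two_step_le (a : ℝ) {b s t : ℝ} (hb : 1 ≤ b) (hs : 1 ≤ s)
    (ht : 1 ≤ t) : |a + 1 / (b + 1 / s) - (a + 1 / (b + 1 / t))| ≤ |s - t| / 4 := by
  have hD := four_le_two_step_denom hb hs ht
  rw [two_step_sub_two_step a (by linarith) (by linarith) (by linarith), abs_div,
    abs_of_pos (by linarith : 0 < (b * s + 1) * (b * t + 1))]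
  gcongr

lemma two_step_sub_le_two_step (a : ℝ) {b s t δ : ℝ} (hb : 1 ≤ b) (hs : 1 ≤ s) (ht : 1 ≤ t)
    (hδ : 0 ≤ δ) (hst : s - δ ≤ t) : a + 1 / (b + 1 / s) - δ / 4 ≤ a + 1 / (b + 1 / t) := by
  have hD := four_le_two_step_denom hb hs ht
  have hdiff := two_step_sub_two_step a (by linarith : 0 ≤ b) (by linarith : 0 < s)
    (by linarith : 0 < t)
  rcases le_total s t with hle | hle
  · have : (s - t) / ((b * s + 1) * (b * t + 1)) ≤ 0 :=
      div_nonpos_of_nonpos_of_nonneg (by linarith) (by linarith)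
    linarith
  · have : (s - t) / ((b * s + 1) * (b * t + 1)) ≤ (s - t) / 4 :=
      div_le_div_of_nonneg_left (by linarith) (by norm_num) hD
    linarith

theorem abs_cfWithTail_sub_le : ∀ (a : ℕ → ℝ), (∀ i, 1 ≤ a i) → ∀ (n : ℕ) {s t : ℝ},
    1 ≤ s → 1 ≤ t → |cfWithTail a n s - cfWithTail a n t| ≤ 2 * (1 / 2) ^ n * |s - t|
  | _, _, 0, s, t, _, _ => by
    simp only [cfWithTail, pow_zero, mul_one]
    linarith [abs_nonneg (s - t)]
  | a, _, 1, s, t, hs, ht => by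
    simpa [cfWithTail] using abs_one_div_sub_one_div_le hs ht
  | a, ha, n + 2, s, t, hs, ht => by
    have ha' : ∀ i, 1 ≤ a (i + 2) := fun i => ha (i + 2)
    calc |cfWithTail a (n + 2) s - cfWithTail a (n + 2) t|
        ≤ |cfWithTail (fun i => a (i + 2)) n s - cfWithTail (fun i => a (i + 2)) n t| / 4 :=
          abs_two_step_sub_two_step_le (a 0) (ha 1) (one_le_cfWithTail ha' n hs)
            (one_le_cfWithTail ha' n ht)
      _ ≤ 2 * (1 / 2) ^ n * |s - t| / 4 := by
          gcongr; exact abs_cfWithTail_sub_le _ ha' n hs ht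
      _ = 2 * (1 / 2) ^ (n + 2) * |s - t| := by ring

section cfVal

variable {a : ℕ → ℝ}

lemma cauchySeq_cfConv (ha : ∀ i, 1 ≤ a i) : CauchySeq (cfConv a) := by
  refine cauchySeq_of_le_geometric (1 / 2) 2 (by norm_num) fun n => ?_
  have hpos : 0 < a (n + 1) := by linarith [ha (n + 1)]
  have hinv : 1 / a (n + 1) ≤ 1 := (div_le_one₀ hpos).2 (ha (n + 1))
  have hinv₀ : 0 ≤ 1 / a (n + 1) := one_div_nonneg.2 hpos.le
  rw [Real.dist_eq, cfConv_eq_cfWithTail, cfConv_succ_eq_cfWithTail]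
  calc |cfWithTail a n (a n) - cfWithTail a n (a n + 1 / a (n + 1))|
      ≤ 2 * (1 / 2) ^ n * |a n - (a n + 1 / a (n + 1))| :=
        abs_cfWithTail_sub_le a ha n (ha n) (by linarith [ha n])
    _ ≤ 2 * (1 / 2) ^ n := by
        rw [sub_add_cancel_left, abs_neg, abs_of_nonneg hinv₀]
        exact mul_le_of_le_one_right (by positivity) hinv

lemma tendsto_cfConv_cfVal (ha : ∀ i, 1 ≤ a i) : Tendsto (cfConv a) atTop (𝓝 (cfVal a)) := by
  obtain ⟨x, hx⟩ := cauchySeq_tendsto_of_complete (cauchySeq_cfConv ha)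
  rwa [cfVal, hx.limUnder_eq]

lemma one_le_cfVal (ha : ∀ i, 1 ≤ a i) : 1 ≤ cfVal a :=
  ge_of_tendsto' (tendsto_cfConv_cfVal ha) fun n => by
    rw [cfConv_eq_cfWithTail]; exact one_le_cfWithTail ha n (ha n)

lemma cfVal_eq_add_one_div (ha : ∀ i, 1 ≤ a (i + 1)) :
    cfVal a = a 0 + 1 / cfVal (fun i => a (i + 1)) := by
  have hlim : Tendsto (fun n => cfConv a (n + 1)) atTop
      (𝓝 (a 0 + 1 / cfVal (fun i => a (i + 1)))) :=
    tendsto_const_nhds.add <| tendsto_const_nhds.div (tendsto_cfConv_cfVal ha)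
      (by linarith [one_le_cfVal ha])
  rw [cfVal, ((tendsto_add_atTop_iff_nat 1).1 hlim).limUnder_eq]

lemma cfVal_eq_two_step (ha : ∀ i, 1 ≤ a (i + 1)) :
    cfVal a = a 0 + 1 / (a 1 + 1 / cfVal (fun i => a (i + 2))) := by
  rw [cfVal_eq_add_one_div ha, cfVal_eq_add_one_div fun i => ha (i + 1)]

end cfVal

/-- `minCf121 1 = [\overline{1,2,2,2}]` and `minCf121 2 = [\overline{2,2,1,2}]`. -/
noncomputable def minCf121 : ℕ → ℝ
  | 1 => (3 + √30) / 6
  | _ => (4 + √30) / 4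

lemma minCf121_one : minCf121 1 = (3 + √30) / 6 := rfl

lemma minCf121_two : minCf121 2 = (4 + √30) / 4 := rfl

lemma sqrt_thirty_bounds : 27 / 5 < √30 ∧ √30 < 6 := by
  constructor
  · rw [Real.lt_sqrt (by norm_num)]; norm_num
  · rw [Real.sqrt_lt' (by norm_num)]; norm_num

lemma one_div_minCf121_one : 1 / minCf121 1 = (2 * √30 - 6) / 7 := by
  have h := Real.sq_sqrt (show (0 : ℝ) ≤ 30 by norm_num)
  rw [minCf121_one, one_div_div, div_eq_div_iff (by positivity) (by norm_num)]
  linear_combination -2 * h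

lemma one_div_minCf121_two : 1 / minCf121 2 = (2 * √30 - 8) / 7 := by
  have h := Real.sq_sqrt (show (0 : ℝ) ≤ 30 by norm_num)
  rw [minCf121_two, one_div_div, div_eq_div_iff (by positivity) (by norm_num)]
  linear_combination -2 * h

lemma two_add_one_div_minCf121_one_add_one_div_minCf121_two :
    2 + 1 / minCf121 1 + 1 / minCf121 2 = 4 * √30 / 7 := by
  rw [one_div_minCf121_one, one_div_minCf121_two]; ring

lemma minCf121_one_eq : minCf121 1 = 1 + 1 / (2 + 1 / minCf121 2) := by
  have h := Real.sq_sqrt (show (0 : ℝ) ≤ 30 by norm_num)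
  have hne : 6 + 2 * √30 ≠ 0 := by positivity
  rw [one_div_minCf121_two, minCf121_one,
    show 2 + (2 * √30 - 8) / 7 = (6 + 2 * √30) / 7 by ring,
    one_div_div, add_div' _ _ _ hne, div_eq_div_iff (by norm_num) hne]
  linear_combination 2 * h

lemma minCf121_two_eq : minCf121 2 = 2 + 1 / (2 + 1 / minCf121 1) := by
  have h := Real.sq_sqrt (show (0 : ℝ) ≤ 30 by norm_num)
  have hne : 8 + 2 * √30 ≠ 0 := by positivity
  rw [one_div_minCf121_one, minCf121_two,
    show 2 + (2 * √30 - 6) / 7 = (8 + 2 * √30) / 7 by ring,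
    one_div_div, add_div' _ _ _ hne, div_eq_div_iff (by norm_num) hne]
  linear_combination 2 * h

lemma one_le_minCf121 (d : ℕ) : 1 ≤ minCf121 d := by
  have := sqrt_thirty_bounds.1
  unfold minCf121; split <;> linarith

lemma minCf121_le_five_halves (d : ℕ) : minCf121 d ≤ 5 / 2 := by
  have := sqrt_thirty_bounds.2
  unfold minCf121; split <;> linarith

lemma minCf121_one_le (d : ℕ) : minCf121 1 ≤ minCf121 d := by
  have := sqrt_thirty_bounds.1
  rw [minCf121_one]
  unfold minCf121; split <;> linarith

lemma minCf121_le_two_step {a b c : ℕ} (ha : a = 1 ∨ a = 2) (hb : b = 1 ∨ b = 2)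
    (hc : c = 1 ∨ c = 2) (h121 : ¬(a = 1 ∧ b = 2 ∧ c = 1)) :
    minCf121 a ≤ a + 1 / (b + 1 / minCf121 c) := by
  have hc₁ := one_le_minCf121 c
  have := sqrt_thirty_bounds.2
  rcases ha with rfl | rfl <;> rcases hb with rfl | rfl <;> push_cast
  · calc minCf121 1 ≤ 1 + 1 / (1 + 1 / 1) := by rw [minCf121_one]; norm_num; linarith
      _ ≤ _ := two_step_mono _ zero_le_one one_pos hc₁
  · obtain rfl : c = 2 := hc.resolve_left (by tauto)
    exact minCf121_one_eq.le
  · calc minCf121 2 ≤ 2 + 1 / (1 + 1 / 1) := by norm_num; linarith [minCf121_le_five_halves 2]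
      _ ≤ _ := two_step_mono _ zero_le_one one_pos hc₁
  · rcases hc with rfl | rfl
    · exact minCf121_two_eq.le
    · calc minCf121 2 = 2 + 1 / (2 + 1 / minCf121 1) := minCf121_two_eq
        _ ≤ 2 + 1 / (2 + 1 / minCf121 2) :=
          two_step_mono _ zero_le_two (by linarith [one_le_minCf121 1]) (minCf121_one_le 2)

def Avoids121 (x : ℕ → ℕ) : Prop :=
  (∀ n, x n = 1 ∨ x n = 2) ∧ ∀ n, ¬(x n = 1 ∧ x (n + 1) = 2 ∧ x (n + 2) = 1)

namespace Avoids121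

variable {x : ℕ → ℕ}

lemma shift (hx : Avoids121 x) (m : ℕ) : Avoids121 (fun n => x (n + m)) :=
  ⟨fun n => hx.1 (n + m), fun n => by simpa only [add_right_comm n m] using hx.2 (n + m)⟩

lemma one_le_cast (hx : Avoids121 x) (n : ℕ) : 1 ≤ (x n : ℝ) := by
  rcases hx.1 n with h | h <;> simp [h]

end Avoids121

lemma minCf121_sub_le_cfVal (N : ℕ) {x : ℕ → ℕ} (hx : Avoids121 x) :
    minCf121 (x 0) - 2 * (1 / 4) ^ N ≤ cfVal (fun n => (x n : ℝ)) := by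
  induction N generalizing x with
  | zero => linarith [minCf121_le_five_halves (x 0), one_le_cfVal hx.one_le_cast]
  | succ N ih =>
    have hx₂ := hx.shift 2
    have hstep := minCf121_le_two_step (hx.1 0) (hx.1 1) (hx.1 2) (hx.2 0)
    rw [cfVal_eq_two_step fun i => hx.one_le_cast (i + 1)]
    calc minCf121 (x 0) - 2 * (1 / 4) ^ (N + 1)
        ≤ x 0 + 1 / (x 1 + 1 / minCf121 (x 2)) - 2 * (1 / 4) ^ N / 4 := by
          rw [pow_succ]; linarith
      _ ≤ _ := two_step_sub_le_two_step _ (hx.one_le_cast 1) (one_le_minCf121 _)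
          (one_le_cfVal hx₂.one_le_cast) (by positivity) (ih hx₂)

theorem minCf121_le_cfVal {x : ℕ → ℕ} (hx : Avoids121 x) :
    minCf121 (x 0) ≤ cfVal (fun n => (x n : ℝ)) := by
  have hpow : Tendsto (fun N : ℕ => (1 / 4 : ℝ) ^ N) atTop (𝓝 0) :=
    tendsto_pow_atTop_nhds_zero_of_lt_one (by norm_num) (by norm_num)
  have hlim : Tendsto (fun N : ℕ => minCf121 (x 0) - 2 * (1 / 4) ^ N) atTop
      (𝓝 (minCf121 (x 0))) := by
    simpa using tendsto_const_nhds.sub (hpow.const_mul 2)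
  exact le_of_tendsto' hlim fun N => minCf121_sub_le_cfVal N hx

lemma lambdaVal_eq {α : ℤ → ℕ} (hα : ∀ n, 0 < α n) (k : ℤ) :
    lambdaVal α k = α k + 1 / cfVal (fun n : ℕ => (α (k + 1 + n) : ℝ)) +
      1 / cfVal (fun n : ℕ => (α (k - 1 - n) : ℝ)) := by
  have one_le (n : ℤ) : 1 ≤ (α n : ℝ) := by exact_mod_cast hα n
  have hR : cfVal (fun n : ℕ => (α (k + n) : ℝ)) =
      α k + 1 / cfVal (fun n : ℕ => (α (k + 1 + n) : ℝ)) := by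
    rw [cfVal_eq_add_one_div fun i => one_le _]
    simp only [Nat.cast_zero, add_zero, Nat.cast_succ, ← add_assoc, add_right_comm k _ (1 : ℤ)]
  have hL : cfVal (fun n : ℕ => if n = 0 then 0 else (α (k - n) : ℝ)) =
      1 / cfVal (fun n : ℕ => (α (k - 1 - n) : ℝ)) := by
    rw [cfVal_eq_add_one_div fun i => by simpa using one_le _]
    simp only [↓reduceIte, Nat.add_one_ne_zero, zero_add, Nat.cast_succ, sub_sub,
      add_comm _ (1 : ℤ)]
  rw [lambdaVal, hR, hL, add_assoc]

section Factor121

variable {α : ℤ → ℕ}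

lemma hasFactor_121 {j : ℤ} (h₀ : α j = 1) (h₁ : α (j + 1) = 2) (h₂ : α (j + 2) = 1) :
    hasFactor α [1, 2, 1] :=
  ⟨j, fun i => by fin_cases i <;> simpa⟩

variable (hα : ∀ n, α n = 1 ∨ α n = 2) (h121 : ¬hasFactor α [1, 2, 1])
include hα h121

lemma avoids121_forward (m : ℤ) : Avoids121 (fun n : ℕ => α (m + n)) :=
  ⟨fun n => hα _, fun n ⟨h₀, h₁, h₂⟩ => h121 <| hasFactor_121 h₀
    (by convert h₁ using 2; push_cast; ring) (by convert h₂ using 2; push_cast; ring)⟩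

lemma avoids121_backward (m : ℤ) : Avoids121 (fun n : ℕ => α (m - n)) :=
  ⟨fun n => hα _, fun n ⟨h₀, h₁, h₂⟩ => h121 <| hasFactor_121 (j := m - n - 2)
    (by convert h₂ using 2; push_cast; ring) (by convert h₁ using 2; push_cast; ring)
    (by convert h₀ using 2; ring)⟩

end Factor121

lemma one_div_minCf121_add_one_div_minCf121_le {b c : ℕ} (hb : b = 1 ∨ b = 2)
    (hc : c = 1 ∨ c = 2) (h : ¬(b = 1 ∧ c = 1)) :
    1 / minCf121 b + 1 / minCf121 c ≤ 1 / minCf121 1 + 1 / minCf121 2 := by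
  have h₂₁ : 1 / minCf121 2 ≤ 1 / minCf121 1 :=
    one_div_le_one_div_of_le (by linarith [one_le_minCf121 1]) (minCf121_one_le 2)
  rcases hb with rfl | rfl <;> rcases hc with rfl | rfl
  · exact absurd ⟨rfl, rfl⟩ h
  · exact le_rfl
  · exact (add_comm _ _).le
  · linarith

theorem lambdaVal_le_of_not_hasFactor_121 {α : ℤ → ℕ} (hα : ∀ n, α n = 1 ∨ α n = 2)
    (h121 : ¬hasFactor α [1, 2, 1]) (k : ℤ) : lambdaVal α k ≤ 4 * √30 / 7 := by
  rw [lambdaVal_eq (fun n => by rcases hα n with h | h <;> simp [h]) k]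
  have hR := minCf121_le_cfVal (avoids121_forward hα h121 (k + 1))
  have hL := minCf121_le_cfVal (avoids121_backward hα h121 (k - 1))
  simp only [Nat.cast_zero, add_zero, sub_zero] at hR hL
  set R := cfVal (fun n : ℕ => (α (k + 1 + n) : ℝ))
  set L := cfVal (fun n : ℕ => (α (k - 1 - n) : ℝ))
  have hR₁ : 1 ≤ R := (one_le_minCf121 _).trans hR
  have hL₁ : 1 ≤ L := (one_le_minCf121 _).trans hL
  rcases hα k with hk | hk <;> rw [hk]
  · have := sqrt_thirty_bounds.1
    have := div_le_one_of_le₀ hR₁ (by linarith)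
    have := div_le_one_of_le₀ hL₁ (by linarith)
    push_cast
    linarith
  · have hne : ¬(α (k + 1) = 1 ∧ α (k - 1) = 1) := fun ⟨h₁, h₂⟩ =>
      h121 (hasFactor_121 (j := k - 1) h₂ (by simpa using hk) (by convert h₁ using 2; ring))
    have := one_div_minCf121_add_one_div_minCf121_le (hα (k + 1)) (hα (k - 1)) hne
    have := one_div_le_one_div_of_le (by linarith [one_le_minCf121 (α (k + 1))]) hR
    have := one_div_le_one_div_of_le (by linarith [one_le_minCf121 (α (k - 1))]) hL
    rw [← two_add_one_div_minCf121_one_add_one_div_minCf121_two]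
    push_cast
    linarith

lemma markovValue_eq_lambdaVal_of_le {α : ℤ → ℕ} {k : ℤ}
    (h : ∀ j, lambdaVal α j ≤ lambdaVal α k) : markovValue α = lambdaVal α k :=
  le_antisymm (ciSup_le h) (le_ciSup ⟨_, forall_mem_range.2 h⟩ k)

lemma cfVal_periodic_121 :
    cfVal (fun n => if n % 4 = 0 then 1 else 2) = minCf121 1 ∧
      cfVal (fun n => if n % 4 = 2 then 1 else 2) = minCf121 2 := by
  set P : ℕ → ℝ := fun n => if n % 4 = 0 then 1 else 2
  set Q : ℕ → ℝ := fun n => if n % 4 = 2 then 1 else 2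
  have hP : ∀ i, 1 ≤ P i := fun i => by simp only [P]; split <;> norm_num
  have hQ : ∀ i, 1 ≤ Q i := fun i => by simp only [Q]; split <;> norm_num
  have hPQ : cfVal P = 1 + 1 / (2 + 1 / cfVal Q) := by
    have hshift : (fun i => P (i + 2)) = Q := by
      funext i; simp only [P, Q, show (i + 2) % 4 = 0 ↔ i % 4 = 2 by omega]
    rw [cfVal_eq_two_step fun i => hP _, hshift]
    simp [P]
  have hQP : cfVal Q = 2 + 1 / (2 + 1 / cfVal P) := by
    have hshift : (fun i => Q (i + 2)) = P := by
      funext i; simp only [P, Q, show (i + 2) % 4 = 2 ↔ i % 4 = 0 by omega]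
    rw [cfVal_eq_two_step fun i => hQ _, hshift]
    simp [Q]
  have h₁ : |cfVal P - minCf121 1| ≤ |cfVal Q - minCf121 2| / 4 := by
    rw [hPQ, minCf121_one_eq]
    exact abs_two_step_sub_two_step_le _ one_le_two (one_le_cfVal hQ) (one_le_minCf121 2)
  have h₂ : |cfVal Q - minCf121 2| ≤ |cfVal P - minCf121 1| / 4 := by
    rw [hQP, minCf121_two_eq]
    exact abs_two_step_sub_two_step_le _ one_le_two (one_le_cfVal hP) (one_le_minCf121 1)
  have h₁' : |cfVal P - minCf121 1| = 0 := by linarith [abs_nonneg (cfVal Q - minCf121 2)]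
  have h₂' : |cfVal Q - minCf121 2| = 0 := by linarith [abs_nonneg (cfVal P - minCf121 1)]
  exact ⟨sub_eq_zero.1 (abs_eq_zero.1 h₁'), sub_eq_zero.1 (abs_eq_zero.1 h₂')⟩

lemma cfVal_per2122_forward :
    cfVal (fun n => if n = 0 then 2 else if n % 4 = 1 then 1 else 2) = 2 + 1 / minCf121 1 := by
  have htail : (fun i => if i + 1 = 0 then (2 : ℝ) else if (i + 1) % 4 = 1 then 1 else 2) =
      fun n => if n % 4 = 0 then 1 else 2 := by
    funext i; simp only [Nat.add_one_ne_zero, if_false, show (i + 1) % 4 = 1 ↔ i % 4 = 0 by omega]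
  rw [cfVal_eq_add_one_div fun i => by rw [if_neg i.add_one_ne_zero]; split_ifs <;> norm_num,
    htail, cfVal_periodic_121.1]
  simp

lemma cfVal_per2122_backward :
    cfVal (fun n => if n = 0 then 0 else if n % 4 = 3 then 1 else 2) = 1 / minCf121 2 := by
  have htail : (fun i => if i + 1 = 0 then (0 : ℝ) else if (i + 1) % 4 = 3 then 1 else 2) =
      fun n => if n % 4 = 2 then 1 else 2 := by
    funext i; simp only [Nat.add_one_ne_zero, if_false, show (i + 1) % 4 = 3 ↔ i % 4 = 2 by omega]
  rw [cfVal_eq_add_one_div fun i => by rw [if_neg i.add_one_ne_zero]; split_ifs <;> norm_num,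
    htail, cfVal_periodic_121.2]
  simp

lemma lambdaVal_per2122_zero :
    lambdaVal per2122 0 = cfVal (fun n => if n = 0 then 2 else if n % 4 = 1 then 1 else 2) +
      cfVal (fun n => if n = 0 then 0 else if n % 4 = 3 then 1 else 2) := by
  rw [lambdaVal]
  congr 2 <;> funext n <;> simp only [per2122, zero_add, zero_sub] <;> split_ifs <;> simp_all <;>
    omega

lemma per2122_eq_one_or_two (n : ℤ) : per2122 n = 1 ∨ per2122 n = 2 := by
  unfold per2122; split <;> simp

lemma not_hasFactor_per2122_121 : ¬hasFactor per2122 [1, 2, 1] := by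
  rintro ⟨j, hj⟩
  have h₀ : per2122 j = 1 := by simpa using hj 0
  have h₂ : per2122 (j + 2) = 1 := by simpa using hj 2
  unfold per2122 at h₀ h₂
  split_ifs at h₀ h₂ <;> omega

/-- Among all `α ∈ {1,2}^ℤ` avoiding the factor `(1,2,1)`, the supremum of the
Markov values is `4√30/7`, attained by the periodic sequence of period
`(2,1,2,2)`, whose Markov value is `[2; \overline{1,2,2,2}] + [0; \overline{2,2,1,2}]
= 4√30/7`. -/
theorem largest_markov_value_without_121 :
    (∀ α : ℤ → ℕ, (∀ n, α n = 1 ∨ α n = 2) → ¬ hasFactor α [1, 2, 1] →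
      markovValue α ≤ 4 * Real.sqrt 30 / 7) ∧
    (∀ n, per2122 n = 1 ∨ per2122 n = 2) ∧
    ¬ hasFactor per2122 [1, 2, 1] ∧
    markovValue per2122 =
      cfVal (fun n => if n = 0 then 2 else if n % 4 = 1 then 1 else 2) +
        cfVal (fun n => if n = 0 then 0 else if n % 4 = 3 then 1 else 2) ∧
    cfVal (fun n => if n = 0 then 2 else if n % 4 = 1 then 1 else 2) +
        cfVal (fun n => if n = 0 then 0 else if n % 4 = 3 then 1 else 2) =
      4 * Real.sqrt 30 / 7 := by
  have hval : cfVal (fun n => if n = 0 then 2 else if n % 4 = 1 then 1 else 2) +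
      cfVal (fun n => if n = 0 then 0 else if n % 4 = 3 then 1 else 2) = 4 * √30 / 7 := by
    rw [cfVal_per2122_forward, cfVal_per2122_backward,
      ← two_add_one_div_minCf121_one_add_one_div_minCf121_two, add_assoc]
  have hbound := lambdaVal_le_of_not_hasFactor_121 per2122_eq_one_or_two not_hasFactor_per2122_121
  refine ⟨fun α hα h121 => ciSup_le (lambdaVal_le_of_not_hasFactor_121 hα h121),
    per2122_eq_one_or_two, not_hasFactor_per2122_121, ?_, hval⟩
  rw [← lambdaVal_per2122_zero]
  exact markovValue_eq_lambdaVal_of_le fun j => by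
    rw [lambdaVal_per2122_zero, hval]; exact hbound j
end
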